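/- arXiv:1101.0573 — 9 statements merged into one kernel-verified Lean document; each statement's English description precedes it below -/
import Mathlib

section
/- Let f₁ : (M₁,F₁) → (M₂,F₂) and f₂ : (M₂,F₂) → (M₃,F₃) be R-linear maps between X-filtered R-modules which are boundedly bicontrolled of filtration degrees ≤ D and ≤ D' respectively. If f₁ is surjective or f₂ is injective, then the composite f₂ ∘ f₁ is boundedly bicontrolled of filtration degree ≤ D + D'. -/
open Set Metric

/-- The metric `D`-enlargement `S[D]` of a subset `S` of a metric space `X`. -/
def enl {X : Type*} [MetricSpace X] (S : Set X) (D : ℝ) : Set X :=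
  {x : X | ∃ s ∈ S, dist x s ≤ D}

/-- `F` is an `X`-filtration of the `R`-module `M`: a monotone assignment of submodules
with `F ∅ = 0` and `F X = M`. -/
def IsXFiltration {R X M : Type*} [Ring R] [MetricSpace X] [AddCommGroup M] [Module R M]
    (F : Set X → Submodule R M) : Prop :=
  Monotone F ∧ F (∅ : Set X) = ⊥ ∧ F Set.univ = ⊤

/-- `f` is boundedly controlled with bound `D`: `f(F₁(S)) ⊆ F₂(S[D])` for all `S`. -/
def BddCtrl {R X M₁ M₂ : Type*} [Ring R] [MetricSpace X]
    [AddCommGroup M₁] [Module R M₁] [AddCommGroup M₂] [Module R M₂]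
    (F₁ : Set X → Submodule R M₁) (F₂ : Set X → Submodule R M₂)
    (f : M₁ →ₗ[R] M₂) (D : ℝ) : Prop :=
  ∀ S : Set X, (F₁ S).map f ≤ F₂ (enl S D)

/-- `f` is boundedly bicontrolled of filtration degree `≤ D`: in addition to being
boundedly controlled with bound `D`, `range(f) ∩ F₂(S) ⊆ f(F₁(S[D]))` for all `S`. -/
def BddBictrl {R X M₁ M₂ : Type*} [Ring R] [MetricSpace X]
    [AddCommGroup M₁] [Module R M₁] [AddCommGroup M₂] [Module R M₂]
    (F₁ : Set X → Submodule R M₁) (F₂ : Set X → Submodule R M₂)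
    (f : M₁ →ₗ[R] M₂) (D : ℝ) : Prop :=
  BddCtrl F₁ F₂ f D ∧
    ∀ S : Set X, LinearMap.range f ⊓ F₂ S ≤ (F₁ (enl S D)).map f

/-- Composition of boundedly bicontrolled maps of filtration degrees `≤ D` and `≤ D'`
is boundedly bicontrolled of filtration degree `≤ D + D'`, provided the first map is
surjective or the second map is injective. -/
theorem bicontrolled_comp
    {R X M₁ M₂ M₃ : Type*} [Ring R] [MetricSpace X]
    [AddCommGroup M₁] [Module R M₁] [AddCommGroup M₂] [Module R M₂]
    [AddCommGroup M₃] [Module R M₃]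
    (F₁ : Set X → Submodule R M₁) (F₂ : Set X → Submodule R M₂)
    (F₃ : Set X → Submodule R M₃)
    (hF₁ : IsXFiltration F₁) (hF₂ : IsXFiltration F₂) (hF₃ : IsXFiltration F₃)
    (f₁ : M₁ →ₗ[R] M₂) (f₂ : M₂ →ₗ[R] M₃) (D D' : ℝ)
    (hD : 0 ≤ D) (hD' : 0 ≤ D')
    (h₁ : BddBictrl F₁ F₂ f₁ D) (h₂ : BddBictrl F₂ F₃ f₂ D')
    (h : Function.Surjective f₁ ∨ Function.Injective f₂) :
    BddBictrl F₁ F₃ (f₂.comp f₁) (D + D') := by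
  have henl : ∀ (S : Set X) (a b : ℝ), enl (enl S a) b ⊆ enl S (a + b) := by
    rintro S a b x ⟨y, ⟨s, hs, hys⟩, hxy⟩
    exact ⟨s, hs, (dist_triangle x y s).trans (by linarith)⟩
  constructor
  · intro S
    rw [Submodule.map_comp]
    calc ((F₁ S).map f₁).map f₂ ≤ (F₂ (enl S D)).map f₂ := Submodule.map_mono (h₁.1 S)
      _ ≤ F₃ (enl (enl S D) D') := h₂.1 _
      _ ≤ F₃ (enl S (D + D')) := hF₃.1 (henl S D D')
  · intro S y hy
    obtain ⟨⟨x₀, hx₀⟩, hyS⟩ := hy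
    have hy2 : y ∈ LinearMap.range f₂ ⊓ F₃ S := ⟨⟨f₁ x₀, hx₀⟩, hyS⟩
    obtain ⟨m, hm, hmy⟩ := h₂.2 S hy2
    have hmrange : m ∈ LinearMap.range f₁ := by
      rcases h with hsurj | hinj
      · exact hsurj m
      · exact ⟨x₀, hinj (by rw [hmy, ← hx₀]; rfl)⟩
    obtain ⟨x, hx, hxm⟩ := h₁.2 (enl S D') ⟨hmrange, hm⟩
    refine ⟨x, hF₁.1 ((henl S D' D).trans (by rw [add_comm]) ) hx, ?_⟩
    simp [hxm, hmy]
end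

section
/- Let f₁ : (M₁,F₁) → (M₂,F₂) and f₂ : (M₂,F₂) → (M₃,F₃) be R-linear maps between X-filtered R-modules, and set f₃ = f₂ ∘ f₁. Suppose f₁ is surjective and boundedly bicontrolled of filtration degree ≤ D. If f₃ is boundedly bicontrolled of filtration degree ≤ D', then f₂ is boundedly bicontrolled of filtration degree ≤ D + D'; if f₃ is merely boundedly controlled with bound D', then f₂ is boundedly controlled with bound D + D'. -/
open Set Metric

/-- If `f₁` is surjective and boundedly bicontrolled of degree `≤ D`, and the composite
`f₃ = f₂ ∘ f₁` is boundedly bicontrolled of degree `≤ D'` (resp. merely boundedly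
controlled with bound `D'`), then `f₂` is boundedly bicontrolled of degree `≤ D + D'`
(resp. boundedly controlled with bound `D + D'`). -/
theorem bicontrolled_of_comp_surjective
    {R X M₁ M₂ M₃ : Type*} [Ring R] [MetricSpace X]
    [AddCommGroup M₁] [Module R M₁] [AddCommGroup M₂] [Module R M₂]
    [AddCommGroup M₃] [Module R M₃]
    (F₁ : Set X → Submodule R M₁) (F₂ : Set X → Submodule R M₂)
    (F₃ : Set X → Submodule R M₃)
    (hF₁ : IsXFiltration F₁) (hF₂ : IsXFiltration F₂) (hF₃ : IsXFiltration F₃)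
    (f₁ : M₁ →ₗ[R] M₂) (f₂ : M₂ →ₗ[R] M₃) (D D' : ℝ)
    (hD : 0 ≤ D) (hD' : 0 ≤ D')
    (h₁ : BddBictrl F₁ F₂ f₁ D) (hsurj : Function.Surjective f₁) :
    (BddBictrl F₁ F₃ (f₂.comp f₁) D' → BddBictrl F₂ F₃ f₂ (D + D')) ∧
    (BddCtrl F₁ F₃ (f₂.comp f₁) D' → BddCtrl F₂ F₃ f₂ (D + D')) := by

  have henl : ∀ (S : Set X) (a b : ℝ), enl (enl S a) b ⊆ enl S (a + b) := by
    rintro S a b x ⟨y, ⟨s, hs, hys⟩, hxy⟩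
    exact ⟨s, hs, le_trans (dist_triangle x y s) (by linarith [add_comm a b])⟩
  have hctrl : BddCtrl F₁ F₃ (f₂.comp f₁) D' → BddCtrl F₂ F₃ f₂ (D + D') := by
    intro h₃ S
    rintro z ⟨y, hy, rfl⟩
    obtain ⟨x, hx, rfl⟩ := h₁.2 S ⟨hsurj y, hy⟩
    have := h₃ (enl S D) ⟨x, hx, rfl⟩
    exact hF₃.1 (henl S D D') this
  refine ⟨fun h₃ => ⟨hctrl h₃.1, ?_⟩, hctrl⟩
  intro S z hz
  obtain ⟨⟨y, rfl⟩, hzS⟩ := hz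
  obtain ⟨x, rfl⟩ := hsurj y
  obtain ⟨x', hx', hfx'⟩ := h₃.2 S ⟨⟨x, rfl⟩, hzS⟩
  refine ⟨f₁ x', ?_, hfx'⟩
  rw [show D + D' = D' + D from add_comm D D']
  exact hF₂.1 (henl S D' D) (h₁.1 (enl S D') ⟨x', hx', rfl⟩)
end

section
/- Let f₁ : (M₁,F₁) → (M₂,F₂) and f₂ : (M₂,F₂) → (M₃,F₃) be R-linear maps between X-filtered R-modules, and set f₃ = f₂ ∘ f₁. Suppose f₂ is injective and boundedly bicontrolled of filtration degree ≤ D. If f₃ is boundedly bicontrolled of filtration degree ≤ D', then f₁ is boundedly bicontrolled of filtration degree ≤ D + D'; if f₃ is merely boundedly controlled with bound D', then f₁ is boundedly controlled with bound D + D'. -/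
open Set Metric

lemma enl_enl {X : Type*} [MetricSpace X] (S : Set X) (D D' : ℝ) :
    enl (enl S D) D' ⊆ enl S (D + D') := by
  rintro x ⟨y, ⟨s, hs, hys⟩, hxy⟩
  exact ⟨s, hs, (dist_triangle x y s).trans (by linarith)⟩

/-- If `f₂` is injective and boundedly bicontrolled of degree `≤ D`, and the composite
`f₃ = f₂ ∘ f₁` is boundedly bicontrolled of degree `≤ D'` (resp. merely boundedly
controlled with bound `D'`), then `f₁` is boundedly bicontrolled of degree `≤ D + D'`
(resp. boundedly controlled with bound `D + D'`). -/
theorem bicontrolled_of_comp_injective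
    {R X M₁ M₂ M₃ : Type*} [Ring R] [MetricSpace X]
    [AddCommGroup M₁] [Module R M₁] [AddCommGroup M₂] [Module R M₂]
    [AddCommGroup M₃] [Module R M₃]
    (F₁ : Set X → Submodule R M₁) (F₂ : Set X → Submodule R M₂)
    (F₃ : Set X → Submodule R M₃)
    (hF₁ : IsXFiltration F₁) (hF₂ : IsXFiltration F₂) (hF₃ : IsXFiltration F₃)
    (f₁ : M₁ →ₗ[R] M₂) (f₂ : M₂ →ₗ[R] M₃) (D D' : ℝ)
    (hD : 0 ≤ D) (hD' : 0 ≤ D')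
    (h₂ : BddBictrl F₂ F₃ f₂ D) (hinj : Function.Injective f₂) :
    (BddBictrl F₁ F₃ (f₂.comp f₁) D' → BddBictrl F₁ F₂ f₁ (D + D')) ∧
    (BddCtrl F₁ F₃ (f₂.comp f₁) D' → BddCtrl F₁ F₂ f₁ (D + D')) := by
  obtain ⟨h₂c, h₂b⟩ := h₂
  have ctrl : BddCtrl F₁ F₃ (f₂.comp f₁) D' → BddCtrl F₁ F₂ f₁ (D + D') := by
    intro h₃ S
    rintro y ⟨m, hm, rfl⟩
    have h1 : f₂ (f₁ m) ∈ F₃ (enl S D') := h₃ S ⟨m, hm, rfl⟩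
    have h2 : f₂ (f₁ m) ∈ (F₂ (enl (enl S D') D)).map f₂ :=
      h₂b (enl S D') ⟨⟨f₁ m, rfl⟩, h1⟩
    obtain ⟨y, hy, hyy⟩ := h2
    have : y = f₁ m := hinj hyy
    subst this
    exact hF₂.1 (by simpa [add_comm] using enl_enl S D' D) hy
  refine ⟨fun h₃ => ⟨ctrl h₃.1, ?_⟩, ctrl⟩
  intro S
  rintro y ⟨⟨m, rfl⟩, hy⟩
  have h1 : f₂ (f₁ m) ∈ F₃ (enl S D) := h₂c S ⟨f₁ m, hy, rfl⟩
  have h2 : f₂ (f₁ m) ∈ (F₁ (enl (enl S D) D')).map (f₂.comp f₁) :=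
    h₃.2 (enl S D) ⟨⟨m, rfl⟩, h1⟩
  obtain ⟨m', hm', hmm⟩ := h2
  refine ⟨m', hF₁.1 (enl_enl S D D') hm', hinj hmm⟩
end

section
/- Let f : (M₁,F₁) → (M₂,F₂) be a boundedly controlled map of X-filtered R-modules. (Kernel) Equip K = ker(f) with the standard filtration K(S) = ker(f) ∩ F₁(S); then the inclusion K → M₁ is boundedly bicontrolled of filtration degree 0, and for every boundedly controlled g : (N,G) → (M₁,F₁) with f ∘ g = 0 the unique R-linear factorization N → K of g through the inclusion is boundedly controlled. (Cokernel) Equip C = M₂/range(f) with the filtration C(S) = π(F₂(S)), where π : M₂ → C is the projection; then π is boundedly bicontrolled of filtration degree 0, and for every boundedly controlled h : (M₂,F₂) → (N,G) with h ∘ f = 0 the unique R-linear factorization C → N of h through π is boundedly controlled. -/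
open Set Metric

lemma subset_enl {X : Type*} [MetricSpace X] (S : Set X) {D : ℝ} (hD : 0 ≤ D) :
    S ⊆ enl S D := fun x hx => ⟨x, hx, by simpa using hD⟩

/-- Kernels and cokernels of boundedly controlled maps: the kernel with its standard
filtration includes into the source by a boundedly bicontrolled map of filtration degree 0,
with the universal property realized by boundedly controlled maps; dually, the projection
onto the cokernel with the image filtration is boundedly bicontrolled of filtration degree 0,
with the universal property realized by boundedly controlled maps. -/
theorem kernel_cokernel_controlled
    {R X M₁ M₂ : Type*} [Ring R] [MetricSpace X]
    [AddCommGroup M₁] [Module R M₁] [AddCommGroup M₂] [Module R M₂]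
    (F₁ : Set X → Submodule R M₁) (F₂ : Set X → Submodule R M₂)
    (hF₁ : IsXFiltration F₁) (hF₂ : IsXFiltration F₂)
    (f : M₁ →ₗ[R] M₂) (Df : ℝ) (hDf : 0 ≤ Df) (hf : BddCtrl F₁ F₂ f Df) :
    -- the inclusion of the kernel, with the standard filtration, is bicontrolled of degree 0
    BddBictrl (fun S => (LinearMap.ker f ⊓ F₁ S).comap (LinearMap.ker f).subtype) F₁
      (LinearMap.ker f).subtype 0 ∧
    -- universal property of the kernel
    (∀ (N : Type u) [AddCommGroup N] [Module R N] (G : Set X → Submodule R N),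
      IsXFiltration G → ∀ (g : N →ₗ[R] M₁) (hg : LinearMap.range g ≤ LinearMap.ker f)
        (Dg : ℝ), BddCtrl G F₁ g Dg →
        ∃ D', BddCtrl G (fun S => (LinearMap.ker f ⊓ F₁ S).comap (LinearMap.ker f).subtype)
          (g.codRestrict (LinearMap.ker f) fun x => hg (LinearMap.mem_range_self g x)) D') ∧
    -- the projection onto the cokernel, with the image filtration, is bicontrolled of degree 0
    BddBictrl F₂ (fun S => (F₂ S).map (LinearMap.range f).mkQ) (LinearMap.range f).mkQ 0 ∧
    -- universal property of the cokernel
    (∀ (N : Type u) [AddCommGroup N] [Module R N] (G : Set X → Submodule R N),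
      IsXFiltration G → ∀ (h : M₂ →ₗ[R] N) (hh : LinearMap.range f ≤ LinearMap.ker h)
        (Dh : ℝ), BddCtrl F₂ G h Dh →
        ∃ D', BddCtrl (fun S => (F₂ S).map (LinearMap.range f).mkQ) G
          ((LinearMap.range f).liftQ h hh) D') := by
  obtain ⟨mono₁, -, -⟩ := hF₁
  obtain ⟨mono₂, -, -⟩ := hF₂
  refine ⟨⟨?_, ?_⟩, ?_, ⟨?_, ?_⟩, ?_⟩
  · intro S x hx
    obtain ⟨⟨y, hy⟩, hmem, rfl⟩ := hx
    exact mono₁ (subset_enl S le_rfl) hmem.2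
  · rintro S x ⟨⟨⟨y, hy⟩, rfl⟩, hxS⟩
    exact ⟨⟨y, hy⟩, ⟨hy, mono₁ (subset_enl S le_rfl) hxS⟩, rfl⟩
  · intro N _ _ G hG g hg Dg hgc
    refine ⟨Dg, fun S x hx => ?_⟩
    obtain ⟨n, hn, rfl⟩ := hx
    exact ⟨hg ⟨n, rfl⟩, hgc S ⟨n, hn, rfl⟩⟩
  · intro S x hx
    obtain ⟨m, hm, rfl⟩ := hx
    exact ⟨m, mono₂ (subset_enl S le_rfl) hm, rfl⟩
  · rintro S x ⟨-, hxS⟩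
    obtain ⟨m, hm, rfl⟩ := hxS
    exact ⟨m, mono₂ (subset_enl S le_rfl) hm, rfl⟩
  · intro N _ _ G hG h hh Dh hhc
    refine ⟨Dh, fun S x hx => ?_⟩
    obtain ⟨y, hy, rfl⟩ := hx
    obtain ⟨m, hm, rfl⟩ := hy
    exact hhc S ⟨m, hm, rfl⟩
end

section
/- Let f : (M₁,F₁) → (M₂,F₂) be a boundedly controlled map of X-filtered R-modules. Equip the coimage J = M₁/ker(f) with the filtration J(S) = p(F₁(S)), where p : M₁ → J is the projection, and equip the image I = range(f) ⊆ M₂ with the filtration I(S) = range(f) ∩ F₂(S). Let θ : J → I be the canonical R-linear isomorphism induced by f. Then f is boundedly bicontrolled (for some filtration degree) if and only if the inverse θ⁻¹ : I → J is boundedly controlled; in that case θ is an isomorphism of X-filtered R-modules with boundedly controlled inverse. -/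
open Set Metric

lemma enl_mono_deg {X : Type*} [MetricSpace X] (S : Set X) {D D' : ℝ} (h : D ≤ D') :
    enl S D ⊆ enl S D' := fun x ⟨s, hs, hd⟩ => ⟨s, hs, hd.trans h⟩

/-- Let `J = M₁/ker f` be the coimage with the quotient filtration and `I = range f` the
image with the standard filtration, and let `θ : J ≃ I` be the canonical isomorphism
induced by `f`.  A boundedly controlled map `f` is boundedly bicontrolled (for some
filtration degree) if and only if `θ⁻¹` is boundedly controlled; moreover `θ` is always
boundedly controlled, so in that case `θ` is an isomorphism of filtered modules with
boundedly controlled inverse. -/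
theorem bicontrolled_iff_coim_im_iso
    {R X M₁ M₂ : Type*} [Ring R] [MetricSpace X]
    [AddCommGroup M₁] [Module R M₁] [AddCommGroup M₂] [Module R M₂]
    (F₁ : Set X → Submodule R M₁) (F₂ : Set X → Submodule R M₂)
    (hF₁ : IsXFiltration F₁) (hF₂ : IsXFiltration F₂)
    (f : M₁ →ₗ[R] M₂) (Df : ℝ) (hDf : 0 ≤ Df) (hf : BddCtrl F₁ F₂ f Df) :
    ((∃ D, 0 ≤ D ∧ BddBictrl F₁ F₂ f D) ↔
      (∃ D', 0 ≤ D' ∧ BddCtrl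
        (fun S => (LinearMap.range f ⊓ F₂ S).comap (LinearMap.range f).subtype)
        (fun S => (F₁ S).map (LinearMap.ker f).mkQ)
        f.quotKerEquivRange.symm.toLinearMap D')) ∧
    (∃ D'', 0 ≤ D'' ∧ BddCtrl
      (fun S => (F₁ S).map (LinearMap.ker f).mkQ)
      (fun S => (LinearMap.range f ⊓ F₂ S).comap (LinearMap.range f).subtype)
      f.quotKerEquivRange.toLinearMap D'') := by
  constructor
  · constructor
    · rintro ⟨D, hD, hctrl, hsurj⟩
      refine ⟨D, hD, fun S => ?_⟩
      rintro y ⟨z, hz, rfl⟩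
      replace hz := Submodule.mem_comap.mp hz
      obtain ⟨x, hx, hfx⟩ := hsurj S hz
      have hz' : z = ⟨f x, LinearMap.mem_range_self f x⟩ := Subtype.ext hfx.symm
      refine ⟨x, hx, ?_⟩
      rw [hz']
      exact (f.quotKerEquivRange_symm_apply_image x _).symm
    · rintro ⟨D', hD', h'⟩
      refine ⟨max Df D', le_trans hDf (le_max_left _ _), fun S => ?_, fun S => ?_⟩
      · exact le_trans (hf S) (hF₂.1 (enl_mono_deg S (le_max_left _ _)))
      · intro m hm
        rw [Submodule.mem_inf] at hm
        have hz : (⟨m, hm.1⟩ : LinearMap.range f) ∈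
            (LinearMap.range f ⊓ F₂ S).comap (LinearMap.range f).subtype := by
          rw [Submodule.mem_comap]; exact Submodule.mem_inf.mpr hm
        have := h' S ⟨_, hz, rfl⟩
        obtain ⟨x, hx, hxq⟩ := this
        have hfx : f x = m := by
          have := congrArg (fun q => (f.quotKerEquivRange q : M₂)) hxq
          simpa [LinearMap.quotKerEquivRange_apply_mk] using this
        exact ⟨x, hF₁.1 (enl_mono_deg S (le_max_right _ _)) hx, hfx⟩
  · refine ⟨Df, hDf, fun S => ?_⟩
    rintro y ⟨q, hq, rfl⟩
    obtain ⟨x, hx, rfl⟩ := hq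
    rw [Submodule.mem_comap, Submodule.mem_inf]
    constructor
    · exact Subtype.coe_prop _
    · have : (f.quotKerEquivRange ((LinearMap.ker f).mkQ x) : M₂) = f x :=
        f.quotKerEquivRange_apply_mk x
      simpa [Submodule.subtype_apply, this] using hf S ⟨x, hx, rfl⟩
end

section
/- Let (M',F') →f (M,F) →g (M'',F'') be an admissible exact sequence of X-filtered R-modules in which f and g are boundedly bicontrolled of filtration degree ≤ b. Define new filtrations F̂'(S) = f⁻¹(F(S)) on M' and F̂''(S) = g(F(S)) on M''. Then for every subset S ⊆ X the sequence 0 → F̂'(S) → F(S) → F̂''(S) → 0 is a short exact sequence of R-modules (f maps F̂'(S) isomorphically onto ker(g) ∩ F(S) and g maps F(S) onto F̂''(S)), and moreover F'(S) ⊆ F̂'(S[b]), F̂'(S) ⊆ F'(S[b]), F''(S) ⊆ F̂''(S[b]) and F̂''(S) ⊆ F''(S[b]) for all S ⊆ X; that is, the identity maps are bounded isomorphisms between the original and the new filtrations. -/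
open Set Metric

/-- For an admissible exact sequence `M' →f M →g M''` of `X`-filtered modules with `f`, `g`
boundedly bicontrolled of degree `≤ b`, the induced filtrations `F̂'(S) = f⁻¹(F(S))` and
`F̂''(S) = g(F(S))` restrict to short exact sequences `0 → F̂'(S) → F(S) → F̂''(S) → 0`
for every `S` (`f` maps `F̂'(S)` onto `ker g ∩ F(S)`, and `g` maps `F(S)` onto `F̂''(S)` by
definition), and the identity maps are bounded isomorphisms between the original and the
new filtrations. -/
theorem induced_filtrations_restrict_exact
    {R X M' M M'' : Type*} [Ring R] [MetricSpace X]
    [AddCommGroup M'] [Module R M'] [AddCommGroup M] [Module R M]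
    [AddCommGroup M''] [Module R M'']
    (F' : Set X → Submodule R M') (F : Set X → Submodule R M)
    (F'' : Set X → Submodule R M'')
    (hF' : IsXFiltration F') (hF : IsXFiltration F) (hF'' : IsXFiltration F'')
    (f : M' →ₗ[R] M) (g : M →ₗ[R] M'') (b : ℝ) (hb : 0 ≤ b)
    (hfb : BddBictrl F' F f b) (hgb : BddBictrl F F'' g b)
    (hfi : Function.Injective f) (hgs : Function.Surjective g)
    (hex : LinearMap.range f = LinearMap.ker g) :
    (∀ S : Set X, ((F S).comap f).map f = LinearMap.ker g ⊓ F S) ∧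
    (∀ S : Set X, F' S ≤ (F (enl S b)).comap f) ∧
    (∀ S : Set X, (F S).comap f ≤ F' (enl S b)) ∧
    (∀ S : Set X, F'' S ≤ (F (enl S b)).map g) ∧
    (∀ S : Set X, (F S).map g ≤ F'' (enl S b)) := by
  refine ⟨?_, ?_, ?_, ?_, ?_⟩
  · intro S
    rw [Submodule.map_comap_eq, hex]
  · intro S
    exact Submodule.map_le_iff_le_comap.mp (hfb.1 S)
  · intro S x hx
    have : f x ∈ (F' (enl S b)).map f := hfb.2 S ⟨⟨x, rfl⟩, hx⟩
    obtain ⟨y, hy, hyx⟩ := this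
    exact (hfi hyx) ▸ hy
  · intro S z hz
    exact hgb.2 S ⟨hgs z, hz⟩
  · intro S
    exact hgb.1 S
end

section
/- Let (E',F') →f (E,F) →g (E'',F'') be an admissible exact sequence of X-filtered R-modules in which f and g are boundedly bicontrolled of filtration degree ≤ b. If F is D-lean, then F'' is (D + 2b)-lean. -/
open Set Metric

/-- `(M, F)` is `D`-lean: `F(S)` is contained in the sum of the `F(B_D(x))` over `x ∈ S`. -/
def IsLean {R X M : Type*} [Ring R] [MetricSpace X] [AddCommGroup M] [Module R M]
    (F : Set X → Submodule R M) (D : ℝ) : Prop :=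
  ∀ S : Set X, F S ≤ ⨆ x ∈ S, F (Metric.closedBall x D)

/-- `(M, F)` is `d`-insular: `F(T) ∩ F(U) ⊆ F(T[d] ∩ U[d])` for all `T`, `U`. -/
def IsInsular {R X M : Type*} [Ring R] [MetricSpace X] [AddCommGroup M] [Module R M]
    (F : Set X → Submodule R M) (d : ℝ) : Prop :=
  ∀ T U : Set X, F T ⊓ F U ≤ F (enl T d ∩ enl U d)

theorem lean_quotient
    {R X M' M M'' : Type*} [Ring R] [MetricSpace X]
    [AddCommGroup M'] [Module R M'] [AddCommGroup M] [Module R M]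
    [AddCommGroup M''] [Module R M'']
    (F' : Set X → Submodule R M') (F : Set X → Submodule R M)
    (F'' : Set X → Submodule R M'')
    (hF' : IsXFiltration F') (hF : IsXFiltration F) (hF'' : IsXFiltration F'')
    (f : M' →ₗ[R] M) (g : M →ₗ[R] M'') (b : ℝ) (hb : 0 ≤ b)
    (hfb : BddBictrl F' F f b) (hgb : BddBictrl F F'' g b)
    (hfi : Function.Injective f) (hgs : Function.Surjective g)
    (hex : LinearMap.range f = LinearMap.ker g)
    (D : ℝ) (hD : 0 ≤ D) (hlean : IsLean F D) :
    IsLean F'' (D + 2*b) := by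
  intro S z hz
  obtain ⟨zz, hzz⟩ := hgs z
  obtain ⟨m, hm, rfl⟩ := hgb.2 S ⟨⟨zz, hzz⟩, hz⟩
  have key : Submodule.map g (⨆ x ∈ enl S b, F (Metric.closedBall x D)) ≤
      ⨆ x ∈ S, F'' (Metric.closedBall x (D + 2*b)) := by
    rw [Submodule.map_iSup]
    refine iSup_le fun x => ?_
    rw [Submodule.map_iSup]
    refine iSup_le fun hx => ?_
    obtain ⟨s, hs, hds⟩ := hx
    calc (F (Metric.closedBall x D)).map g
        ≤ F'' (enl (Metric.closedBall x D) b) := hgb.1 _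
      _ ≤ F'' (Metric.closedBall s (D + 2*b)) := by
          refine hF''.1 ?_
          intro y hy
          obtain ⟨u, hu, hdu⟩ := hy
          simp only [Metric.mem_closedBall] at *
          calc dist y s ≤ dist y u + dist u x + dist x s := dist_triangle4 y u x s
            _ ≤ D + 2*b := by linarith
      _ ≤ ⨆ x ∈ S, F'' (Metric.closedBall x (D + 2*b)) :=
          le_iSup_of_le s (le_iSup_of_le hs le_rfl)
  exact key ⟨m, hlean _ hm, rfl⟩
end

section
/- Let e : (M,F) → (M,F) be a boundedly controlled R-linear endomorphism of an X-filtered R-module with bound D satisfying e ∘ e = e. Then e is boundedly bicontrolled of filtration degree ≤ D; moreover M = ker(e) ⊕ range(e), the inclusions of ker(e) and range(e) with their standard filtrations (K(S) = ker(e) ∩ F(S) and I(S) = range(e) ∩ F(S)) and the corresponding projections 1 − e and e are boundedly controlled, and F(S) ⊆ (ker(e) ∩ F(S[D])) + (range(e) ∩ F(S[D])) for all S ⊆ X. -/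
open Set Metric

/-- A boundedly controlled idempotent `e` with bound `D` is boundedly bicontrolled of
filtration degree `≤ D`; moreover `M = ker(e) ⊕ range(e)`, the inclusions of `ker(e)` and
`range(e)` with their standard filtrations and the projections `1 - e` and `e` are
boundedly controlled, and `F(S) ⊆ (ker(e) ∩ F(S[D])) + (range(e) ∩ F(S[D]))` for all `S`. -/
theorem idempotent_splits
    {R X M : Type*} [Ring R] [MetricSpace X]
    [AddCommGroup M] [Module R M]
    (F : Set X → Submodule R M) (hF : IsXFiltration F)
    (e : M →ₗ[R] M) (D : ℝ) (hD : 0 ≤ D)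
    (he : BddCtrl F F e D) (hid : e.comp e = e) :
    BddBictrl F F e D ∧
    IsCompl (LinearMap.ker e) (LinearMap.range e) ∧
    BddCtrl (fun S => (LinearMap.ker e ⊓ F S).comap (LinearMap.ker e).subtype) F
      (LinearMap.ker e).subtype 0 ∧
    BddCtrl (fun S => (LinearMap.range e ⊓ F S).comap (LinearMap.range e).subtype) F
      (LinearMap.range e).subtype 0 ∧
    BddCtrl F F (LinearMap.id - e) D ∧
    BddCtrl F F e D ∧
    (∀ S : Set X,
      F S ≤ (LinearMap.ker e ⊓ F (enl S D)) ⊔ (LinearMap.range e ⊓ F (enl S D))) := by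

  have hee : ∀ x, e (e x) = e x := fun x => congrArg (· x) hid
  have hsub : ∀ (S : Set X) (D' : ℝ), 0 ≤ D' → S ⊆ enl S D' := by
    intro S D' hD' x hx
    exact ⟨x, hx, by simpa using hD'⟩
  have hmono := hF.1
  refine ⟨⟨he, ?_⟩, ?_, ?_, ?_, ?_, he, ?_⟩
  · intro S x ⟨⟨y, hy⟩, hxS⟩
    exact ⟨x, hmono (hsub S D hD) hxS, by rw [← hy, hee, hy]⟩
  · constructor
    · rw [disjoint_iff_inf_le]
      rintro x ⟨hk, y, hy⟩
      have : e x = x := by rw [← hy, hee, hy]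
      simp only [SetLike.mem_coe, Submodule.mem_bot]
      rw [← this, LinearMap.mem_ker.mp hk]
    · rw [codisjoint_iff_le_sup]
      intro x _
      exact Submodule.mem_sup.2 ⟨x - e x, by simp [hee], e x, ⟨x, rfl⟩, by abel⟩
  · rintro S x ⟨⟨y, hy⟩, hmem, rfl⟩
    exact hmono (hsub S 0 le_rfl) hmem.2
  · rintro S x ⟨⟨y, hy⟩, hmem, rfl⟩
    exact hmono (hsub S 0 le_rfl) hmem.2
  · rintro S x ⟨y, hy, rfl⟩
    have h1 : y ∈ F (enl S D) := hmono (hsub S D hD) hy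
    have h2 : e y ∈ F (enl S D) := he S ⟨y, hy, rfl⟩
    simpa using (F (enl S D)).sub_mem h1 h2
  · intro S x hx
    have h1 : x ∈ F (enl S D) := hmono (hsub S D hD) hx
    have h2 : e x ∈ F (enl S D) := he S ⟨x, hx, rfl⟩
    refine Submodule.mem_sup.2 ⟨x - e x, ⟨by simp [hee], (F (enl S D)).sub_mem h1 h2⟩,
      e x, ⟨⟨x, rfl⟩, h2⟩, by abel⟩
end

section
/- Let Z ⊆ X and let (M',F') →f (M,F) →g (M'',F'') be an admissible exact sequence of X-filtered R-modules in which f and g are boundedly bicontrolled of filtration degree ≤ b. If M' is supported near Z with F'(X) = F'(Z[d']) and M'' is supported near Z with F''(X) = F''(Z[d'']), then M is supported near Z: F(X) = F(Z[d]) for d = max{d' + b, d'' + b}. -/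
open Set Metric

lemma enl_enl_subset {X : Type*} [MetricSpace X] (S : Set X) {a a' b : ℝ}
    (h : a + b ≤ a') : enl (enl S a) b ⊆ enl S a' := by
  rintro x ⟨y, ⟨s, hs, hys⟩, hxy⟩
  refine ⟨s, hs, ?_⟩
  calc dist x s ≤ dist x y + dist y s := dist_triangle _ _ _
    _ ≤ b + a := add_le_add hxy hys
    _ ≤ a' := by linarith

/-- In an admissible exact sequence of `X`-filtered modules with `f`, `g` boundedly
bicontrolled of degree `≤ b`, if the sub- and quotient modules are supported near `Z`
with `F'(X) = F'(Z[d'])` and `F''(X) = F''(Z[d''])`, then the middle module is supported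
near `Z`: `F(X) = F(Z[d])` for `d = max {d' + b, d'' + b}`. -/
theorem supported_near_extension
    {R X M' M M'' : Type*} [Ring R] [MetricSpace X]
    [AddCommGroup M'] [Module R M'] [AddCommGroup M] [Module R M]
    [AddCommGroup M''] [Module R M'']
    (F' : Set X → Submodule R M') (F : Set X → Submodule R M)
    (F'' : Set X → Submodule R M'')
    (hF' : IsXFiltration F') (hF : IsXFiltration F) (hF'' : IsXFiltration F'')
    (f : M' →ₗ[R] M) (g : M →ₗ[R] M'') (b : ℝ) (hb : 0 ≤ b)
    (hfb : BddBictrl F' F f b) (hgb : BddBictrl F F'' g b)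
    (hfi : Function.Injective f) (hgs : Function.Surjective g)
    (hex : LinearMap.range f = LinearMap.ker g)
    (Z : Set X) (d' d'' : ℝ) (hd' : 0 ≤ d') (hd'' : 0 ≤ d'')
    (hM' : F' Set.univ = F' (enl Z d')) (hM'' : F'' Set.univ = F'' (enl Z d'')) :
    F Set.univ = F (enl Z (max (d' + b) (d'' + b))) := by
  obtain ⟨hFmono, -, hFtop⟩ := hF
  apply le_antisymm _ (hFmono (Set.subset_univ _))
  intro m hm
  have hgm : g m ∈ F'' (enl Z d'') := by
    rw [← hM'', hF''.2.2]; trivial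
  obtain ⟨m₁, hm₁, hgm₁⟩ := hgb.2 (enl Z d'') ⟨⟨m, rfl⟩, hgm⟩
  have hk : m - m₁ ∈ LinearMap.range f := by
    rw [hex]; simp [LinearMap.mem_ker, hgm₁]
  obtain ⟨m', hfm'⟩ := hk
  have hm' : m' ∈ F' (enl Z d') := by rw [← hM', hF'.2.2]; trivial
  have h1 : f m' ∈ F (enl Z (max (d' + b) (d'' + b))) :=
    hFmono (enl_enl_subset Z (le_max_left _ _)) (hfb.1 _ ⟨m', hm', rfl⟩)
  have h2 : m₁ ∈ F (enl Z (max (d' + b) (d'' + b))) :=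
    hFmono (enl_enl_subset Z (le_max_right _ _)) hm₁
  have : m = f m' + m₁ := by rw [hfm']; abel
  rw [this]
  exact add_mem h1 h2
end
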